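/- arXiv:1909.01983 — 5 statements merged into one kernel-verified Lean document; each statement's English description precedes it below -/
import Mathlib

section
/- Let Y be a separable Hilbert space, G ∈ L(Y) compact selfadjoint with I+G bijective, and K ∈ L(Y) compact selfadjoint positive semidefinite with ker K = ker(K^{1/2}(I+G)K^{1/2}). Then the nonzero spectra of (I+G)K and K^{1/2}(I+G)K^{1/2} coincide: for every τ ≠ 0, τ I − (I+G)K is not injective if and only if τ I − K^{1/2}(I+G)K^{1/2} is not injective. -/
/-!
With `A = (1 + G) 𝕜` and `B = 𝕜` we have `(1 + G) K = A B` and `𝕜 (1 + G) 𝕜 = B A`. For `μ ≠ 0`,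
`B` maps a `μ`-eigenvector of `A B` to a `μ`-eigenvector of `B A` (it cannot kill it, since
`A B x = μ x ≠ 0`), and symmetrically, so `A B` and `B A` have the same nonzero eigenvalues.
-/

namespace Module.End

variable {𝕜 V W : Type*} [CommRing 𝕜] [AddCommGroup V] [Module 𝕜 V] [AddCommGroup W] [Module 𝕜 W]

theorem HasEigenvector.comp_swap [IsDomain 𝕜] [IsTorsionFree 𝕜 V] {A : W →ₗ[𝕜] V}
    {B : V →ₗ[𝕜] W} {μ : 𝕜} {x : V} (hx : HasEigenvector (A ∘ₗ B) μ x) (hμ : μ ≠ 0) :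
    HasEigenvector (B ∘ₗ A) μ (B x) := by
  have hABx : A (B x) = μ • x := hx.apply_eq_smul
  refine ⟨mem_eigenspace_iff.2 ?_, fun hBx => hx.2 ?_⟩
  · simp [hABx]
  · rwa [hBx, map_zero, eq_comm, smul_eq_zero_iff_right hμ] at hABx

theorem hasEigenvalue_comp_comm [IsDomain 𝕜] [IsTorsionFree 𝕜 V] [IsTorsionFree 𝕜 W]
    (A : W →ₗ[𝕜] V) (B : V →ₗ[𝕜] W) {μ : 𝕜} (hμ : μ ≠ 0) :
    HasEigenvalue (A ∘ₗ B) μ ↔ HasEigenvalue (B ∘ₗ A) μ := by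
  constructor
  · intro h
    obtain ⟨x, hx⟩ := h.exists_hasEigenvector
    exact hasEigenvalue_of_hasEigenvector (hx.comp_swap hμ)
  · intro h
    obtain ⟨x, hx⟩ := h.exists_hasEigenvector
    exact hasEigenvalue_of_hasEigenvector (hx.comp_swap hμ)

theorem hasEigenvalue_iff_not_injective_smul_one_sub (f : End 𝕜 V) (μ : 𝕜) :
    HasEigenvalue f μ ↔ ¬ Function.Injective ⇑(μ • (1 : End 𝕜 V) - f) := by
  rw [hasEigenvalue_iff, eigenspace_def, ← neg_sub, LinearMap.ker_neg, Ne, LinearMap.ker_eq_bot]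

end Module.End

theorem stmt_1_general {Y : Type*} [NormedAddCommGroup Y] [InnerProductSpace ℂ Y]
    (G K R : Y →L[ℂ] Y)
    (hRR : R ∘L R = K) :
    ∀ τ : ℂ, τ ≠ 0 →
      (¬ Function.Injective ⇑(τ • (1 : Y →L[ℂ] Y) - (1 + G) ∘L K : Y →L[ℂ] Y) ↔
        ¬ Function.Injective ⇑(τ • (1 : Y →L[ℂ] Y) - R ∘L (1 + G) ∘L R : Y →L[ℂ] Y)) := by
  intro τ hτ
  subst hRR
  have h := Module.End.hasEigenvalue_comp_comm ((1 + G) ∘L R : Y →ₗ[ℂ] Y) (R : Y →ₗ[ℂ] Y) hτ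
  rw [Module.End.hasEigenvalue_iff_not_injective_smul_one_sub,
    Module.End.hasEigenvalue_iff_not_injective_smul_one_sub] at h
  exact h

/-- The nonzero spectra of `(I+G)K` and `K^{1/2}(I+G)K^{1/2}` coincide:
for every `τ ≠ 0`, `τ I − (I+G)K` is not injective iff `τ I − K^{1/2}(I+G)K^{1/2}` is not
injective. `R` denotes the positive square root of `K`. -/
theorem stmt_1 {Y : Type*} [NormedAddCommGroup Y] [InnerProductSpace ℂ Y] [CompleteSpace Y]
    [TopologicalSpace.SeparableSpace Y]
    (G K R : Y →L[ℂ] Y)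
    (hGc : IsCompactOperator ⇑G) (hGsa : IsSelfAdjoint G)
    (hGbij : Function.Bijective ⇑(1 + G))
    (hKc : IsCompactOperator ⇑K) (hKsa : IsSelfAdjoint K)
    (hKpos : ∀ y : Y, 0 ≤ (inner ℂ (K y) y : ℂ).re)
    (hRsa : IsSelfAdjoint R) (hRpos : ∀ y : Y, 0 ≤ (inner ℂ (R y) y : ℂ).re)
    (hRR : R ∘L R = K)
    (hker : LinearMap.ker (K : Y →ₗ[ℂ] Y) = LinearMap.ker ((R ∘L (1 + G) ∘L R : Y →L[ℂ] Y) : Y →ₗ[ℂ] Y)) :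
    ∀ τ : ℂ, τ ≠ 0 →
      (¬ Function.Injective ⇑(τ • (1 : Y →L[ℂ] Y) - (1 + G) ∘L K : Y →L[ℂ] Y) ↔
        ¬ Function.Injective ⇑(τ • (1 : Y →L[ℂ] Y) - R ∘L (1 + G) ∘L R : Y →L[ℂ] Y)) :=
  stmt_1_general G K R hRR
end

section
/- Let X be a Hilbert space and A ∈ L(X) be selfadjoint, positive semidefinite, injective, and weakly coercive (i.e., A + K₀ is coercive for some compact operator K₀). Then A is strictly positive definite: inf over nonzero u of ⟨A u, u⟩/‖u‖² is positive. -/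
/-!
If `A` were not coercive there would be unit vectors `vₙ` with `⟪A vₙ, vₙ⟫ → 0`. Writing
`A = B²` with `B = √A` gives `⟪A vₙ, vₙ⟫ = ‖B vₙ‖²`, hence `A vₙ = B (B vₙ) → 0`. Since `A` is
selfadjoint and injective its range is dense, and `⟪vₙ, A y⟫ = ⟪A vₙ, y⟫ → 0` then shows that
`vₙ ⇀ 0` weakly. A compact `K₀` maps a subsequence of `vₙ` to a convergent one, so
`⟪vₙ, K₀ vₙ⟫ → 0` along it, and `|⟪(A + K₀) vₙ, vₙ⟫| → 0` contradicts the coercivity of `A + K₀`.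
-/

open Filter Topology

open scoped InnerProductSpace

section RCLike

variable {𝕜 E ι : Type*} [RCLike 𝕜] [NormedAddCommGroup E] [InnerProductSpace 𝕜 E]

theorem tendsto_inner_zero_of_norm_le_of_tendsto_zero {l : Filter ι} {x y : ι → E} {C : ℝ}
    (hx : ∀ i, ‖x i‖ ≤ C) (hy : Tendsto y l (𝓝 0)) :
    Tendsto (fun i => ⟪x i, y i⟫_𝕜) l (𝓝 0) := by
  rw [tendsto_zero_iff_norm_tendsto_zero]
  refine squeeze_zero (fun _ => norm_nonneg _) (fun i => ?_)
    (by simpa using (tendsto_zero_iff_norm_tendsto_zero.1 hy).const_mul C)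
  calc ‖⟪x i, y i⟫_𝕜‖ ≤ ‖x i‖ * ‖y i‖ := norm_inner_le_norm _ _
    _ ≤ C * ‖y i‖ := by gcongr; exact hx i

theorem IsSelfAdjoint.denseRange_of_injective [CompleteSpace E] {T : E →L[𝕜] E}
    (hT : IsSelfAdjoint T) (hinj : Function.Injective T) : DenseRange T := by
  have h : T.rangeᗮ = ⊥ := by
    rw [T.orthogonal_range, hT.adjoint_eq, LinearMap.ker_eq_bot]
    exact hinj
  rw [← Submodule.topologicalClosure_eq_top_iff,
    ← Submodule.dense_iff_topologicalClosure_eq_top] at h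
  simpa [DenseRange, LinearMap.coe_range] using h

theorem LinearMap.IsSymmetric.tendsto_inner_of_tendsto_apply_zero {T : E →L[𝕜] E}
    (hT : (T : E →ₗ[𝕜] E).IsSymmetric) (hdense : DenseRange T) {l : Filter ι} {v : ι → E}
    {C : ℝ} (hv : ∀ i, ‖v i‖ ≤ C) (hTv : Tendsto (fun i => T (v i)) l (𝓝 0)) (z : E) :
    Tendsto (fun i => ⟪v i, z⟫_𝕜) l (𝓝 0) := by
  have hbdd : ∃ C, ∀ i, ‖innerSL 𝕜 (v i)‖ ≤ C :=
    ⟨C, fun i => (innerSL_apply_norm 𝕜 (v i)).trans_le (hv i)⟩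
  have hequi : Equicontinuous fun i z => ⟪v i, z⟫_𝕜 :=
    ((NormedSpace.equicontinuous_TFAE fun i => innerSL 𝕜 (v i)).out 5 1).1 hbdd
  -- the functionals `⟪v i, ·⟫` are uniformly bounded, so where they tend to `0` is a closed set
  refine hdense.induction_on z (hequi.isClosed_setOfPred_tendsto continuous_const) fun y => ?_
  have h : Tendsto (fun i => ⟪T (v i), y⟫_𝕜) l (𝓝 0) := by
    simpa using hTv.inner (𝕜 := 𝕜) (tendsto_const_nhds (x := y))
  exact h.congr fun i => hT (v i) y

theorem IsCompactOperator.exists_subseq_tendsto_inner_apply_zero {K : E →L[𝕜] E}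
    (hK : IsCompactOperator K) {v : ℕ → E} {C : ℝ} (hv : ∀ n, ‖v n‖ ≤ C)
    (hweak : ∀ z, Tendsto (fun n => ⟪v n, z⟫_𝕜) atTop (𝓝 0)) :
    ∃ φ : ℕ → ℕ, StrictMono φ ∧ Tendsto (fun n => ⟪v (φ n), K (v (φ n))⟫_𝕜) atTop (𝓝 0) := by
  obtain ⟨S, hS, hKS⟩ :=
    (show IsCompactOperator (K : E →ₗ[𝕜] E) from hK).image_closedBall_subset_compact C
  obtain ⟨w, -, φ, hφ, hKw⟩ := hS.tendsto_subseq fun n => hKS ⟨v n, by simpa using hv n, rfl⟩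
  refine ⟨φ, hφ, ?_⟩
  have h1 : Tendsto (fun n => ⟪v (φ n), K (v (φ n)) - w⟫_𝕜) atTop (𝓝 0) :=
    tendsto_inner_zero_of_norm_le_of_tendsto_zero (fun n => hv _) (tendsto_sub_nhds_zero_iff.2 hKw)
  simpa [inner_sub_right] using h1.add ((hweak w).comp hφ.tendsto_atTop)

theorem ContinuousLinearMap.exists_norm_eq_one_reApplyInnerSelf_lt {T : E →L[𝕜] E}
    (h : ¬ ∃ c > 0, ∀ u, c * ‖u‖ ^ 2 ≤ T.reApplyInnerSelf u) {ε : ℝ} (hε : 0 < ε) :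
    ∃ u, ‖u‖ = 1 ∧ T.reApplyInnerSelf u < ε := by
  push Not at h
  obtain ⟨u, hu⟩ := h ε hε
  have hu0 : u ≠ 0 := by rintro rfl; simp [T.reApplyInnerSelf_apply] at hu
  refine ⟨(‖u‖⁻¹ : 𝕜) • u, norm_smul_inv_norm hu0, ?_⟩
  have : 0 < ‖u‖ := norm_pos_iff.2 hu0
  rw [T.reApplyInnerSelf_smul]
  simp only [norm_inv, norm_algebraMap', norm_norm, inv_pow]
  rwa [inv_mul_lt_iff₀ (by positivity), mul_comm]

end RCLike

section Complex

variable {X ι : Type*} [NormedAddCommGroup X] [InnerProductSpace ℂ X] [CompleteSpace X]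

theorem ContinuousLinearMap.reApplyInnerSelf_eq_norm_sqrt_apply_sq {A : X →L[ℂ] X} (hA : 0 ≤ A)
    (u : X) : A.reApplyInnerSelf u = ‖CFC.sqrt A u‖ ^ 2 := by
  have hB := (nonneg_iff_isPositive _).1 (CFC.sqrt_nonneg A)
  conv_lhs => rw [← CFC.sqrt_mul_sqrt_self A hA]
  rw [reApplyInnerSelf_apply, mul_apply_eq_comp, hB.inner_left_eq_inner_right,
    inner_self_eq_norm_sq]

theorem ContinuousLinearMap.tendsto_apply_zero_of_tendsto_reApplyInnerSelf {A : X →L[ℂ] X}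
    (hA : 0 ≤ A) {l : Filter ι} {v : ι → X}
    (h : Tendsto (fun i => A.reApplyInnerSelf (v i)) l (𝓝 0)) :
    Tendsto (fun i => A (v i)) l (𝓝 0) := by
  have hB : Tendsto (fun i => CFC.sqrt A (v i)) l (𝓝 0) := by
    simp_rw [A.reApplyInnerSelf_eq_norm_sqrt_apply_sq hA] at h
    simpa [tendsto_zero_iff_norm_tendsto_zero] using h.sqrt
  have hBB := ((CFC.sqrt A).continuous.tendsto 0).comp hB
  rw [map_zero] at hBB
  exact hBB.congr fun i => by
    rw [Function.comp_apply, ← mul_apply_eq_comp, CFC.sqrt_mul_sqrt_self A hA]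

end Complex

/-- A selfadjoint, positive semidefinite, injective and weakly coercive bounded
operator on a Hilbert space is strictly positive definite. -/
theorem stmt_4 {X : Type*} [NormedAddCommGroup X] [InnerProductSpace ℂ X] [CompleteSpace X]
    (A : X →L[ℂ] X) (hAsa : IsSelfAdjoint A)
    (hApos : ∀ u : X, 0 ≤ (inner ℂ (A u) u : ℂ).re)
    (hAinj : Function.Injective ⇑A)
    (hweak : ∃ K₀ : X →L[ℂ] X, IsCompactOperator ⇑K₀ ∧
      ∃ c > (0 : ℝ), ∀ u : X, c * ‖u‖ ^ 2 ≤ ‖(inner ℂ ((A + K₀) u) u : ℂ)‖) :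
    ∃ c > (0 : ℝ), ∀ u : X, c * ‖u‖ ^ 2 ≤ (inner ℂ (A u) u : ℂ).re := by
  have hA : 0 ≤ A := A.nonneg_iff_isPositive.2 (A.isPositive_def'.2 ⟨hAsa, hApos⟩)
  obtain ⟨K₀, hK, c, hc, hcoer⟩ := hweak
  by_contra hA_not_coercive
  choose v hv_unit hv_re using fun n : ℕ =>
    A.exists_norm_eq_one_reApplyInnerSelf_lt hA_not_coercive (Nat.one_div_pos_of_nat (n := n))
  have hv : ∀ n, ‖v n‖ ≤ 1 := fun n => (hv_unit n).le
  have hAv := A.tendsto_apply_zero_of_tendsto_reApplyInnerSelf hA <|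
    squeeze_zero (fun n => hApos _) (fun n => (hv_re n).le) tendsto_one_div_add_atTop_nhds_zero_nat
  obtain ⟨φ, hφ, hK₀v⟩ := hK.exists_subseq_tendsto_inner_apply_zero hv <|
    hAsa.isSymmetric.tendsto_inner_of_tendsto_apply_zero (hAsa.denseRange_of_injective hAinj) hv hAv
  have hsmall : Tendsto (fun n => ‖⟪v (φ n), A (v (φ n))⟫_ℂ‖ + ‖⟪v (φ n), K₀ (v (φ n))⟫_ℂ‖)
      atTop (𝓝 0) := by
    simpa using (tendsto_inner_zero_of_norm_le_of_tendsto_zero (𝕜 := ℂ) (fun n => hv (φ n))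
      (hAv.comp hφ.tendsto_atTop)).norm.add hK₀v.norm
  refine hc.not_ge (ge_of_tendsto hsmall (Eventually.of_forall fun n => ?_))
  calc c = c * ‖v (φ n)‖ ^ 2 := by simp [hv_unit]
    _ ≤ ‖⟪(A + K₀) (v (φ n)), v (φ n)⟫_ℂ‖ := hcoer _
    _ = ‖⟪v (φ n), A (v (φ n))⟫_ℂ + ⟪v (φ n), K₀ (v (φ n))⟫_ℂ‖ := by
      rw [norm_inner_symm, add_apply, inner_add_right]
    _ ≤ _ := norm_add_le _ _
end

section
/- Let Y be a Hilbert space, K ∈ L(Y) compact selfadjoint positive semidefinite, and let Ỹ := (ker K)^⊥. Then for τ → 0⁺ the operators (P_Ỹ(τ I + K)|_Ỹ)^{-1/2} K^{1/2} converge pointwise (in the strong operator topology) to the orthogonal projection P_Ỹ onto Ỹ. -/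
/-!
Put `S τ = Q τ * Q τ`. The hypotheses give `S τ * (τ • 1 + K) = P`; taking adjoints, `S τ`
commutes with `K = R * R`, so by uniqueness of positive square roots `Q τ` commutes with `K` and
then with `R`. Hence `T = Q τ * R` is positive with `T * T = P - τ • S τ ≤ P`, so `T ≤ 1`,
`T * T ≤ T`, and `(T - P)² = T * T - 2 • T + P ≤ P - T * T = τ • S τ`. It remains that
`τ • S τ → 0` strongly: the family is bounded by `1`, vanishes on `ker K`, and
`τ • S τ * K = τ • (P - τ • S τ)` is `O(τ)`, while the range of `K` is dense in `(ker K)ᗮ`.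
-/

open Filter Topology

section Ring

variable {A : Type*} [Ring A] [Algebra ℝ A] {p q r : A} {τ : ℝ}

lemma mul_smul_one_add_eq_of_mul_eq_self (hrp : r * r * p = r * r) (hqp : q * p = q)
    (hinv : q * q * (τ • 1 + r * r) * p = p) : q * q * (τ • 1 + r * r) = p := by
  rw [← hinv]
  simp only [mul_add, add_mul, mul_smul_comm, smul_mul_assoc, mul_one, mul_assoc, hrp, hqp]

lemma mul_self_mul_mul_self_eq_sub_smul (h : q * q * (τ • 1 + r * r) = p) :
    q * q * (r * r) = p - τ • (q * q) := by
  rw [← h, mul_add, mul_smul_one, add_sub_cancel_left]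

lemma mul_mul_self_eq_sub_smul (hqr : Commute q r) (h : q * q * (τ • 1 + r * r) = p) :
    q * r * (q * r) = p - τ • (q * q) := by
  rw [← mul_self_mul_mul_self_eq_sub_smul h, hqr.symm.mul_mul_mul_comm]

end Ring

section CStarAlgebra

variable {A : Type*} [CStarAlgebra A] {p q r t : A} {τ : ℝ}

lemma IsSelfAdjoint.mul_eq_self_of_mul_self_mul_eq (hr : IsSelfAdjoint r) (hp : IsSelfAdjoint p)
    (hrp : r * r * p = r * r) : r * p = r := by
  have hprr : p * (r * r) = r * r := by
    simpa [hr.star_eq, hp.star_eq, mul_assoc] using congr_arg star hrp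
  refine (sub_eq_zero.1 ((CStarRing.star_mul_self_eq_zero_iff _).1 ?_)).symm
  calc star (r - r * p) * (r - r * p) = r * r - r * r * p - p * (r * r) + p * (r * r) * p := by
        rw [star_sub, star_mul, hr.star_eq, hp.star_eq]; noncomm_ring
    _ = 0 := by rw [hrp, hprr, hrp]; abel

variable [PartialOrder A] [StarOrderedRing A]

lemma Commute.of_mul_self_right {a c : A} (hc : 0 ≤ c) (h : Commute a (c * c)) :
    Commute a c := by
  simpa [← CFC.sqrt_eq_cfc, CFC.sqrt_mul_self c hc] using (h.symm.cfc_nnreal NNReal.sqrt).symm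

lemma Commute.of_mul_self_mul_smul_one_add_eq (hp : IsSelfAdjoint p) (hq : 0 ≤ q) (hr : 0 ≤ r)
    (h : q * q * (τ • 1 + r * r) = p) : Commute q r := by
  have h' : (τ • 1 + r * r) * (q * q) = p := by
    simpa [hq.isSelfAdjoint.star_eq, hr.isSelfAdjoint.star_eq, hp.star_eq, mul_assoc]
      using congr_arg star h
  have hkq : Commute (r * r) (q * q) := by
    have := h.trans h'.symm
    simp only [mul_add, add_mul, mul_smul_comm, smul_mul_assoc, mul_one, one_mul] at this
    exact (add_left_cancel this).symm
  exact (hkq.of_mul_self_right hq).symm.of_mul_self_right hr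

lemma IsStarProjection.le_one_of_mul_self_le (hp : IsStarProjection p) (ht : 0 ≤ t)
    (htt : t * t ≤ p) : t ≤ 1 := by
  have hnorm : ‖t‖ ^ 2 ≤ 1 := by
    rw [← ht.isSelfAdjoint.norm_mul_self]
    exact (CStarAlgebra.norm_le_norm_of_nonneg_of_le ht.isSelfAdjoint.mul_self_nonneg htt).trans
      (hp.norm_le p)
  rwa [← CStarAlgebra.norm_le_one_iff_of_nonneg t ht, ← sq_le_one_iff₀ (norm_nonneg t)]

lemma smul_mul_self_le (hq : 0 ≤ q) (hr : 0 ≤ r) (hqr : Commute q r)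
    (h : q * q * (τ • 1 + r * r) = p) : τ • (q * q) ≤ p := by
  rw [← sub_nonneg, ← mul_mul_self_eq_sub_smul hqr h]
  exact (hqr.mul_nonneg hq hr).isSelfAdjoint.mul_self_nonneg

lemma norm_smul_mul_self_le_one (hp : IsStarProjection p) (hq : 0 ≤ q) (hr : 0 ≤ r) (hτ : 0 ≤ τ)
    (hqr : Commute q r) (h : q * q * (τ • 1 + r * r) = p) : ‖τ • (q * q)‖ ≤ 1 :=
  (CStarAlgebra.norm_le_norm_of_nonneg_of_le (smul_nonneg hτ hq.isSelfAdjoint.mul_self_nonneg)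
    (smul_mul_self_le hq hr hqr h)).trans (hp.norm_le p)

lemma star_sub_mul_sub_le (hp : IsStarProjection p) (hq : 0 ≤ q) (hr : 0 ≤ r) (hτ : 0 ≤ τ)
    (hrp : r * p = r) (hqr : Commute q r) (h : q * q * (τ • 1 + r * r) = p) :
    star (q * r - p) * (q * r - p) ≤ τ • (q * q) := by
  set t := q * r
  have ht : 0 ≤ t := hqr.mul_nonneg hq hr
  have htp : t * p = t := by rw [mul_assoc, hrp]
  have hpt : p * t = t := by
    simpa [ht.isSelfAdjoint.star_eq, hp.isSelfAdjoint.star_eq] using congr_arg star htp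
  have htt : t * t ≤ p := by
    rw [mul_mul_self_eq_sub_smul hqr h]
    exact sub_le_self p (smul_nonneg hτ hq.isSelfAdjoint.mul_self_nonneg)
  have htt' : t ^ 2 ≤ t ^ 1 :=
    CStarAlgebra.pow_antitone ht (hp.le_one_of_mul_self_le ht htt) one_le_two
  calc star (t - p) * (t - p) = p - t * t - (2 : ℝ) • (t - t * t) := by
        rw [star_sub, ht.isSelfAdjoint.star_eq, hp.isSelfAdjoint.star_eq, sub_mul, mul_sub,
          mul_sub, htp, hpt, hp.isIdempotentElem.eq, two_smul]
        abel
    _ ≤ p - t * t :=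
        sub_le_self _ (smul_nonneg zero_le_two (sub_nonneg.2 (by simpa [sq] using htt')))
    _ = τ • (q * q) := by rw [mul_mul_self_eq_sub_smul hqr h, sub_sub_cancel]

end CStarAlgebra

lemma ContinuousLinearMap.tendsto_apply_of_mem_closure {ι 𝕜 E F : Type*}
    [NontriviallyNormedField 𝕜] [SeminormedAddCommGroup E] [NormedSpace 𝕜 E]
    [SeminormedAddCommGroup F] [NormedSpace 𝕜 F] {l : Filter ι} {B : ι → E →L[𝕜] F} {C : ℝ}
    (hB : ∀ᶠ i in l, ‖B i‖ ≤ C) {s : Set E} (hs : ∀ y ∈ s, Tendsto (fun i ↦ B i y) l (𝓝 0))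
    {x : E} (hx : x ∈ closure s) : Tendsto (fun i ↦ B i x) l (𝓝 0) := by
  rw [Metric.tendsto_nhds]
  intro ε hε
  obtain ⟨δ, hδ, hCδ⟩ := exists_pos_mul_lt (half_pos hε) C
  obtain ⟨y, hy, hxy⟩ := Metric.mem_closure_iff.1 hx δ hδ
  filter_upwards [hB, Metric.tendsto_nhds.1 (hs y hy) _ (half_pos hε)] with i hBi hyi
  rw [dist_zero_right] at hyi ⊢
  rw [dist_eq_norm] at hxy
  calc ‖B i x‖ = ‖B i (x - y) + B i y‖ := by rw [← map_add, sub_add_cancel]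
    _ ≤ C * ‖x - y‖ + ‖B i y‖ := norm_add_le_of_le ((B i).le_of_opNorm_le hBi _) le_rfl
    _ < ε / 2 + ε / 2 := by
        gcongr
        exact (mul_le_mul_of_nonneg_left hxy.le ((norm_nonneg _).trans hBi)).trans_lt hCδ
    _ = ε := add_halves ε

lemma tendsto_of_norm_sub_sq_le {ι E F : Type*} [SeminormedAddCommGroup E]
    [SeminormedAddCommGroup F] {l : Filter ι} {f : ι → E} {g : ι → F} {a : E} {c : ℝ}
    (hg : Tendsto g l (𝓝 0)) (h : ∀ᶠ i in l, ‖f i - a‖ ^ 2 ≤ ‖g i‖ * c) :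
    Tendsto f l (𝓝 a) := by
  rw [tendsto_iff_norm_sub_tendsto_zero]
  refine squeeze_zero' (.of_forall fun _ ↦ norm_nonneg _)
    (h.mono fun _ hi ↦ Real.le_sqrt_of_sq_le hi) ?_
  simpa using (hg.norm.mul_const c).sqrt

section InnerProductSpace

variable {𝕜 E : Type*} [RCLike 𝕜] [NormedAddCommGroup E] [InnerProductSpace 𝕜 E] [CompleteSpace E]

lemma ContinuousLinearMap.nonneg_of_re_inner_self_nonneg {T : E →L[𝕜] E} (hT : IsSelfAdjoint T)
    (h : ∀ x, 0 ≤ RCLike.re (inner 𝕜 (T x) x)) : 0 ≤ T :=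
  (nonneg_iff_isPositive T).2 (isPositive_def'.2 ⟨hT, h⟩)

lemma IsSelfAdjoint.mul_eq_self_of_orthogonal_le_ker {P T : E →L[𝕜] E} (hP : IsSelfAdjoint P)
    {N : Submodule 𝕜 E} (hfix : ∀ y ∈ N, P y = y) (hT : Nᗮ ≤ LinearMap.ker (T : E →ₗ[𝕜] E)) :
    T * P = T := by
  ext x
  have hx : x - P x ∈ Nᗮ := (Submodule.mem_orthogonal _ _).2 fun u hu ↦ by
    rw [inner_sub_right, ← P.adjoint_inner_left, hP.adjoint_eq, hfix u hu, sub_self]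
  exact (sub_eq_zero.1 (by simpa using hT hx)).symm

lemma ContinuousLinearMap.norm_apply_sq_le_of_star_mul_self_le {D B : E →L[𝕜] E}
    (h : star D * D ≤ B) (x : E) : ‖D x‖ ^ 2 ≤ ‖B x‖ * ‖x‖ := by
  have h' := ((le_def _ _).1 h).re_inner_nonneg_left x
  rw [sub_apply, inner_sub_left, map_sub, sub_nonneg, mul_apply_eq_comp, star_eq_adjoint,
    adjoint_inner_left, inner_self_eq_norm_sq] at h'
  exact h'.trans (re_inner_le_norm _ _)

lemma ContinuousLinearMap.mem_closure_range_of_mem_orthogonal_ker {K : E →L[𝕜] E}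
    (hK : IsSelfAdjoint K) {x : E} (hx : x ∈ (LinearMap.ker (K : E →ₗ[𝕜] E))ᗮ) :
    x ∈ closure (Set.range K) := by
  rwa [← coe_coe, ← LinearMap.coe_range, ← Submodule.topologicalClosure_coe, ← hK.adjoint_eq,
    ← orthogonal_ker]

end InnerProductSpace

lemma ContinuousLinearMap.tendsto_smul_apply_of_mul_eq {E : Type*} [NormedAddCommGroup E]
    [InnerProductSpace ℂ E] [CompleteSpace E] {K P : E →L[ℂ] E} {S : ℝ → E →L[ℂ] E}
    (hK : IsSelfAdjoint K) (hSK : ∀ τ > 0, S τ * K = P - τ • S τ)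
    (hS : ∀ τ > 0, ‖τ • S τ‖ ≤ 1) {x : E} (hx : x ∈ (LinearMap.ker (K : E →ₗ[ℂ] E))ᗮ) :
    Tendsto (fun τ : ℝ ↦ (τ • S τ) x) (𝓝[>] 0) (𝓝 0) := by
  refine tendsto_apply_of_mem_closure (eventually_nhdsWithin_of_forall hS) ?_
    (mem_closure_range_of_mem_orthogonal_ker hK hx)
  rintro _ ⟨w, rfl⟩
  refine squeeze_zero_norm' (a := fun τ ↦ τ * ((‖P‖ + 1) * ‖w‖)) ?_ ?_
  · filter_upwards [self_mem_nhdsWithin] with τ (hτ : 0 < τ)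
    rw [smul_apply, ← mul_apply_eq_comp, hSK τ hτ, norm_smul, Real.norm_of_nonneg hτ.le]
    gcongr
    refine (le_opNorm _ _).trans ?_
    gcongr
    exact (norm_sub_le _ _).trans (by gcongr; exact hS τ hτ)
  · refine tendsto_nhdsWithin_of_tendsto_nhds ?_
    simpa using (tendsto_id (x := 𝓝 (0 : ℝ))).mul_const ((‖P‖ + 1) * ‖w‖)

theorem stmt_9_general {Y : Type*} [NormedAddCommGroup Y] [InnerProductSpace ℂ Y] [CompleteSpace Y]
    (K R : Y →L[ℂ] Y)
    (hKsa : IsSelfAdjoint K)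
    (hRsa : IsSelfAdjoint R) (hRpos : ∀ y : Y, 0 ≤ (inner ℂ (R y) y : ℂ).re)
    (hRR : R ∘L R = K)
    (P : Y →L[ℂ] Y) (hPsa : IsSelfAdjoint P)
    (hPmem : ∀ y : Y, P y ∈ (LinearMap.ker (K : Y →ₗ[ℂ] Y))ᗮ)
    (hPfix : ∀ y ∈ (LinearMap.ker (K : Y →ₗ[ℂ] Y))ᗮ, P y = y)
    (Q : ℝ → (Y →L[ℂ] Y))
    (hQsa : ∀ τ > (0 : ℝ), IsSelfAdjoint (Q τ))
    (hQpos : ∀ τ > (0 : ℝ), ∀ y : Y, 0 ≤ (inner ℂ (Q τ y) y : ℂ).re)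
    (hQzero : ∀ τ > (0 : ℝ), ∀ y ∈ ((LinearMap.ker (K : Y →ₗ[ℂ] Y))ᗮ : Submodule ℂ Y)ᗮ, Q τ y = 0)
    (hQinv : ∀ τ > (0 : ℝ), ∀ x ∈ (LinearMap.ker (K : Y →ₗ[ℂ] Y))ᗮ,
      Q τ (Q τ ((τ • (1 : Y →L[ℂ] Y) + K : Y →L[ℂ] Y) x)) = x) :
    ∀ y : Y, Filter.Tendsto (fun τ => Q τ (R y)) (nhdsWithin 0 (Set.Ioi 0)) (nhds (P y)) := by
  obtain rfl : R * R = K := hRR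
  have hR : 0 ≤ R := ContinuousLinearMap.nonneg_of_re_inner_self_nonneg hRsa hRpos
  have hQ (τ : ℝ) (hτ : 0 < τ) : 0 ≤ Q τ :=
    ContinuousLinearMap.nonneg_of_re_inner_self_nonneg (hQsa τ hτ) (hQpos τ hτ)
  have hP : IsStarProjection P := ⟨ContinuousLinearMap.ext fun y ↦ hPfix _ (hPmem y), hPsa⟩
  have hKP : R * R * P = R * R :=
    hPsa.mul_eq_self_of_orthogonal_le_ker hPfix (Submodule.orthogonal_orthogonal _).le
  have hQP (τ : ℝ) (hτ : 0 < τ) : Q τ * P = Q τ :=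
    hPsa.mul_eq_self_of_orthogonal_le_ker hPfix (hQzero τ hτ)
  have hres (τ : ℝ) (hτ : 0 < τ) : Q τ * Q τ * (τ • 1 + R * R) = P :=
    mul_smul_one_add_eq_of_mul_eq_self hKP (hQP τ hτ)
      (ContinuousLinearMap.ext fun y ↦ hQinv τ hτ (P y) (hPmem y))
  have hQR (τ : ℝ) (hτ : 0 < τ) : Commute (Q τ) R :=
    .of_mul_self_mul_smul_one_add_eq hPsa (hQ τ hτ) hR (hres τ hτ)
  intro y
  have hconv : Tendsto (fun τ : ℝ ↦ (τ • (Q τ * Q τ)) y) (𝓝[>] 0) (𝓝 0) := by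
    refine (ContinuousLinearMap.tendsto_smul_apply_of_mul_eq hKsa
      (fun τ hτ ↦ mul_self_mul_mul_self_eq_sub_smul (hres τ hτ))
      (fun τ hτ ↦ norm_smul_mul_self_le_one hP (hQ τ hτ) hR hτ.le (hQR τ hτ) (hres τ hτ))
      (hPmem y)).congr' ?_
    filter_upwards [self_mem_nhdsWithin] with τ (hτ : 0 < τ)
    rw [smul_apply, smul_apply, ← mul_apply_eq_comp, mul_assoc, hQP τ hτ]
  refine tendsto_of_norm_sub_sq_le (c := ‖y‖) hconv ?_
  filter_upwards [self_mem_nhdsWithin] with τ (hτ : 0 < τ)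
  exact ContinuousLinearMap.norm_apply_sq_le_of_star_mul_self_le (star_sub_mul_sub_le hP (hQ τ hτ)
    hR hτ.le (hRsa.mul_eq_self_of_mul_self_mul_eq hPsa hKP) (hQR τ hτ) (hres τ hτ)) y

/-- Let `K` be compact selfadjoint positive semidefinite with positive square
root `R`, let `N := (ker K)ᗮ`, `P` the orthogonal projection onto `N`, and for `τ > 0` let
`Q τ` be the (extension by zero of the) inverse square root of the compression of `τI + K`
to `N`, i.e. `Q τ` is selfadjoint positive semidefinite, has range in `N`, vanishes on `Nᗮ`
and satisfies `Q τ (Q τ ((τI + K) x)) = x` for `x ∈ N`. Then `(Q τ) ∘ R` converges pointwise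
(strongly) to `P` as `τ → 0⁺`. -/
theorem stmt_9 {Y : Type*} [NormedAddCommGroup Y] [InnerProductSpace ℂ Y] [CompleteSpace Y]
    (K R : Y →L[ℂ] Y)
    (hKc : IsCompactOperator ⇑K) (hKsa : IsSelfAdjoint K)
    (hKpos : ∀ y : Y, 0 ≤ (inner ℂ (K y) y : ℂ).re)
    (hRsa : IsSelfAdjoint R) (hRpos : ∀ y : Y, 0 ≤ (inner ℂ (R y) y : ℂ).re)
    (hRR : R ∘L R = K)
    (P : Y →L[ℂ] Y) (hPsa : IsSelfAdjoint P)
    (hPmem : ∀ y : Y, P y ∈ (LinearMap.ker (K : Y →ₗ[ℂ] Y))ᗮ)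
    (hPfix : ∀ y ∈ (LinearMap.ker (K : Y →ₗ[ℂ] Y))ᗮ, P y = y)
    (Q : ℝ → (Y →L[ℂ] Y))
    (hQsa : ∀ τ > (0 : ℝ), IsSelfAdjoint (Q τ))
    (hQpos : ∀ τ > (0 : ℝ), ∀ y : Y, 0 ≤ (inner ℂ (Q τ y) y : ℂ).re)
    (hQmem : ∀ τ > (0 : ℝ), ∀ y : Y, Q τ y ∈ (LinearMap.ker (K : Y →ₗ[ℂ] Y))ᗮ)
    (hQzero : ∀ τ > (0 : ℝ), ∀ y ∈ ((LinearMap.ker (K : Y →ₗ[ℂ] Y))ᗮ : Submodule ℂ Y)ᗮ, Q τ y = 0)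
    (hQinv : ∀ τ > (0 : ℝ), ∀ x ∈ (LinearMap.ker (K : Y →ₗ[ℂ] Y))ᗮ,
      Q τ (Q τ ((τ • (1 : Y →L[ℂ] Y) + K : Y →L[ℂ] Y) x)) = x) :
    ∀ y : Y, Filter.Tendsto (fun τ => Q τ (R y)) (nhdsWithin 0 (Set.Ioi 0)) (nhds (P y)) :=
  stmt_9_general K R hKsa hRsa hRpos hRR P hPsa hPmem hPfix Q hQsa hQpos hQzero hQinv
end

section
/- Let Y be a separable infinite-dimensional Hilbert space, G ∈ L(Y) compact selfadjoint with I+G bijective, and K ∈ L(Y) compact selfadjoint positive semidefinite with ker K = ker(K^{1/2}(I+G)K^{1/2}), dim (ker K)^⊥ = ∞, and with P_⊥(I+G)|_⊥ bijective where P_⊥ is the orthogonal projection onto (ker K)^⊥. Then the spectrum of K^{1/2}(I+G)K^{1/2} consists of 0 and an infinite sequence of real nonzero eigenvalues (τₙ) tending to 0, of which all but finitely many are positive. -/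
/-!
`T = R (1 + G) R` is compact and selfadjoint, so its nonzero spectrum consists of real
eigenvalues, and these accumulate only at `0`: unit eigenvectors for distinct eigenvalues are
orthonormal, and a compact operator maps orthonormal sequences to null sequences. There are
infinitely many of them, since by the spectral theorem finitely many would make
`(ker T)ᗮ = (ker K)ᗮ` finite-dimensional; `0` then lies in the closed spectrum as their limit.
Only finitely many are negative: eigenvectors `e n` for negative eigenvalues give
`⟪(1 + G) R y, R y⟫ = ⟪T y, y⟫ ≤ 0` on their span, so `⟪(1 + G) x, x⟫ ≤ 0` on the
infinite-dimensional span of the `R (e n)`, whereas `⟪(1 + G) z n, z n⟫ → 1` along every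
orthonormal sequence `z` because `G` is compact.
-/

open Filter Topology Module End

lemma exists_injective_range_eq_tendsto {α : Type*} [MetricSpace α] {S : Set α} {a : α}
    (hS : S.Infinite) (hfar : ∀ ε > 0, {x ∈ S | ε ≤ dist x a}.Finite) :
    ∃ τ : ℕ → α, Function.Injective τ ∧ Set.range τ = S ∧ Tendsto τ atTop (𝓝 a) := by
  have hcount : S.Countable := by
    refine ((Set.countable_iUnion fun n : ℕ =>
      (hfar (1 / (n + 1)) (by positivity)).countable).insert a).mono fun x hx => ?_
    rcases eq_or_ne x a with rfl | hxa
    · exact Set.mem_insert _ _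
    obtain ⟨n, hn⟩ := exists_nat_one_div_lt (dist_pos.2 hxa)
    exact Set.mem_insert_of_mem _ (Set.mem_iUnion.2 ⟨n, hx, hn.le⟩)
  obtain ⟨_⟩ := Set.countable_infinite_iff_nonempty_denumerable.1 ⟨hcount, hS⟩
  let τ : ℕ ≃ S := (Denumerable.eqv S).symm
  have hτ : Function.Injective (Subtype.val ∘ τ) := Subtype.val_injective.comp τ.injective
  refine ⟨Subtype.val ∘ τ, hτ, by simp [Set.range_comp], ?_⟩
  rw [← Nat.cofinite_eq_atTop, Metric.tendsto_nhds]
  intro ε hε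
  exact ((hfar ε hε).preimage hτ.injOn).subset fun n hn => ⟨(τ n).2, not_lt.1 hn⟩

section RCLike

variable {𝕜 E F : Type*} [RCLike 𝕜] [NormedAddCommGroup E] [InnerProductSpace 𝕜 E]
  [NormedAddCommGroup F] [InnerProductSpace 𝕜 F]

local notation "⟪" x ", " y "⟫" => inner 𝕜 x y

lemma Orthonormal.tendsto_inner_right {e : ℕ → E} (he : Orthonormal 𝕜 e) (x : E) :
    Tendsto (fun n => ⟪e n, x⟫) atTop (𝓝 0) := by
  have h := (he.inner_products_summable x).tendsto_atTop_zero.sqrt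
  simp only [Real.sqrt_sq (norm_nonneg _), Real.sqrt_zero] at h
  exact tendsto_zero_iff_norm_tendsto_zero.2 h

open RCLike in
lemma Orthonormal.re_inner_apply_self_nonpos {ι : Type*} {e : ι → E} (he : Orthonormal 𝕜 e)
    {T : E →ₗ[𝕜] E} {μ : ι → ℝ} (hμ : ∀ i, μ i ≤ 0) (hTe : ∀ i, T (e i) = (μ i : 𝕜) • e i)
    {y : E} (hy : y ∈ Submodule.span 𝕜 (Set.range e)) : re ⟪T y, y⟫ ≤ 0 := by
  obtain ⟨c, rfl⟩ := Finsupp.mem_span_range_iff_exists_finsupp.1 hy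
  have hTy : T (c.sum fun i a => a • e i) = c.sum fun i a => (a * μ i) • e i := by
    simp only [Finsupp.sum, map_sum, map_smul, hTe, smul_smul]
  rw [hTy, Finsupp.sum, Finsupp.sum, he.inner_sum, map_sum]
  refine Finset.sum_nonpos fun i _ => ?_
  have : starRingEnd 𝕜 (c i * μ i) * c i = ((‖c i‖ ^ 2 * μ i : ℝ) : 𝕜) := by
    rw [map_mul, conj_ofReal, mul_right_comm, RCLike.conj_mul]
    push_cast
    ring
  rw [this, ofReal_re]
  exact mul_nonpos_of_nonneg_of_nonpos (sq_nonneg _) (hμ i)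

lemma LinearMap.IsSymmetric.exists_orthonormal_eigenvectors {T : E →ₗ[𝕜] E} (hT : T.IsSymmetric)
    {μ : ℕ → 𝕜} (hμ : Function.Injective μ) (h : ∀ n, HasEigenvalue T (μ n)) :
    ∃ e : ℕ → E, Orthonormal 𝕜 e ∧ ∀ n, T (e n) = μ n • e n := by
  have hunit n : ∃ v : E, ‖v‖ = 1 ∧ v ∈ eigenspace T (μ n) := by
    obtain ⟨v, hv, hv0⟩ := (h n).exists_hasEigenvector
    exact ⟨(‖v‖⁻¹ : 𝕜) • v, norm_smul_inv_norm hv0, Submodule.smul_mem _ _ hv⟩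
  choose e he1 heig using hunit
  refine ⟨e, ⟨he1, fun m n hmn => ?_⟩, fun n => mem_eigenspace_iff.1 (heig n)⟩
  exact hT.orthogonalFamily_eigenspaces (hμ.ne hmn) ⟨e m, heig m⟩ ⟨e n, heig n⟩

lemma Submodule.finiteDimensional_of_disjoint_orthogonal {U V : Submodule 𝕜 E}
    [FiniteDimensional 𝕜 V] (h : Disjoint U Vᗮ) : FiniteDimensional 𝕜 U := by
  refine FiniteDimensional.of_injective
    ((V.orthogonalProjectionOnto : E →ₗ[𝕜] V) ∘ₗ U.subtype) ?_
  rw [← LinearMap.ker_eq_bot, LinearMap.ker_comp]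
  exact Submodule.disjoint_iff_comap_eq_bot.1 (V.ker_orthogonalProjectionOnto ▸ h)

variable [CompleteSpace E]

lemma IsCompactOperator.tendsto_apply_orthonormal [CompleteSpace F]
    {T : E →L[𝕜] F} (hT : IsCompactOperator T) {e : ℕ → E} (he : Orthonormal 𝕜 e) :
    Tendsto (fun n => T (e n)) atTop (𝓝 0) := by
  obtain ⟨K, hK, hTK⟩ := hT.image_closedBall_subset_compact 1
  refine tendsto_of_subseq_tendsto fun ns hns => ?_
  obtain ⟨y, -, φ, hφ, hy⟩ := hK.tendsto_subseq fun n =>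
    hTK ⟨e (ns n), by simp [he.1], rfl⟩
  suffices y = 0 from ⟨φ, this ▸ hy⟩
  refine ext_inner_right 𝕜 fun v => ?_
  have hweak : Tendsto (fun n => ⟪T (e (ns (φ n))), v⟫) atTop (𝓝 0) := by
    simpa only [Function.comp_def, ContinuousLinearMap.adjoint_inner_right] using
      (he.tendsto_inner_right (T.adjoint v)).comp (hns.comp hφ.tendsto_atTop)
  rw [inner_zero_left]
  exact tendsto_nhds_unique (hy.inner tendsto_const_nhds) hweak

lemma IsCompactOperator.tendsto_inner_apply_orthonormal {G : E →L[𝕜] E}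
    (hG : IsCompactOperator G) {z : ℕ → E} (hz : Orthonormal 𝕜 z) :
    Tendsto (fun n => ⟪G (z n), z n⟫) atTop (𝓝 0) := by
  refine squeeze_zero_norm (fun n => ?_) (by simpa using (hG.tendsto_apply_orthonormal hz).norm)
  simpa [hz.1 n] using norm_inner_le_norm (𝕜 := 𝕜) (G (z n)) (z n)

open RCLike in
lemma IsCompactOperator.exists_re_inner_one_add_apply_pos {G : E →L[𝕜] E}
    (hG : IsCompactOperator G) {w : ℕ → E} (hw : LinearIndependent 𝕜 w) :
    ∃ x ∈ Submodule.span 𝕜 (Set.range w), 0 < re ⟪(1 + G) x, x⟫ := by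
  let z := InnerProductSpace.gramSchmidtNormed 𝕜 w
  have hz : Orthonormal 𝕜 z := InnerProductSpace.gramSchmidtNormed_orthonormal hw
  have hlim : Tendsto (fun n => re ⟪(1 + G) (z n), z n⟫) atTop (𝓝 1) := by
    have h := ((continuous_re.tendsto 0).comp (hG.tendsto_inner_apply_orthonormal hz)).const_add 1
    simpa [inner_add_left, inner_self_eq_norm_sq, hz.1] using h
  obtain ⟨n, hn⟩ := (hlim.eventually (eventually_gt_nhds one_pos)).exists
  refine ⟨z n, ?_, hn⟩
  rw [← InnerProductSpace.span_gramSchmidt, ← InnerProductSpace.span_gramSchmidtNormed_range]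
  exact Submodule.subset_span ⟨n, rfl⟩

lemma IsCompactOperator.finite_setOf_hasEigenvalue_le_norm {T : E →L[𝕜] E}
    (hT : IsCompactOperator T) (hT' : IsSelfAdjoint T) {ε : ℝ} (hε : 0 < ε) :
    {μ : 𝕜 | HasEigenvalue (T : End 𝕜 E) μ ∧ ε ≤ ‖μ‖}.Finite := by
  by_contra hinf
  let μ := (Set.not_finite.1 hinf).natEmbedding
  obtain ⟨e, he, hTe⟩ := hT'.isSymmetric.exists_orthonormal_eigenvectors
    (Subtype.val_injective.comp μ.injective) fun n => (μ n).2.1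
  obtain ⟨n, hn⟩ := ((hT.tendsto_apply_orthonormal he).norm.eventually
    (eventually_lt_nhds (by simpa using hε))).exists
  have : ‖T (e n)‖ = ‖(μ n : 𝕜)‖ := by
    rw [show T (e n) = (μ n : 𝕜) • e n from hTe n, norm_smul, he.1, mul_one]
  exact (this ▸ hn).not_ge (μ n).2.2

lemma IsCompactOperator.finiteDimensional_orthogonal_ker {T : E →L[𝕜] E}
    (hT : IsCompactOperator T) (hT' : IsSelfAdjoint T)
    (hfin : {μ : 𝕜 | μ ≠ 0 ∧ HasEigenvalue (T : End 𝕜 E) μ}.Finite) :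
    FiniteDimensional 𝕜 (LinearMap.ker (T : End 𝕜 E))ᗮ := by
  set Λ := {μ : 𝕜 | μ ≠ 0 ∧ HasEigenvalue (T : End 𝕜 E) μ}
  have := hfin.to_subtype
  let V := ⨆ μ : Λ, eigenspace (T : End 𝕜 E) μ
  have (μ : Λ) : FiniteDimensional 𝕜 (eigenspace (T : End 𝕜 E) μ) :=
    T.finite_dimensional_eigenspace hT μ μ.2.1
  have hle : (⨆ μ, eigenspace (T : End 𝕜 E) μ) ≤ LinearMap.ker (T : End 𝕜 E) ⊔ V := by
    refine iSup_le fun μ => ?_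
    by_cases hμ : HasEigenvalue (T : End 𝕜 E) μ
    · rcases eq_or_ne μ 0 with rfl | hμ0
      · exact eigenspace_zero (T : End 𝕜 E) ▸ le_sup_left
      · exact le_sup_of_le_right (le_iSup_of_le (ι := Λ) ⟨μ, hμ0, hμ⟩ le_rfl)
    · exact (not_not.1 hμ : eigenspace _ μ = ⊥) ▸ bot_le
  refine Submodule.finiteDimensional_of_disjoint_orthogonal (V := V) ?_
  rw [disjoint_iff, Submodule.inf_orthogonal, ← le_bot_iff,
    ← T.orthogonalComplement_iSup_eigenspaces_eq_bot hT hT'.isSymmetric]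
  exact Submodule.orthogonal_le hle

lemma IsCompactOperator.finite_setOf_neg_hasEigenvalue_conj {G R : E →L[𝕜] E}
    (hG : IsCompactOperator G) (hG' : IsSelfAdjoint G) (hR : IsSelfAdjoint R) :
    {μ : ℝ | μ < 0 ∧ HasEigenvalue (R ∘L (1 + G) ∘L R : End 𝕜 E) μ}.Finite := by
  by_contra hinf
  let μ := (Set.not_finite.1 hinf).natEmbedding
  have hT : IsSelfAdjoint (R ∘L (1 + G) ∘L R) := ((IsSelfAdjoint.one _).add hG').conjugate_self hR
  obtain ⟨e, he, hTe⟩ := hT.isSymmetric.exists_orthonormal_eigenvectors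
    (RCLike.ofReal_injective.comp (Subtype.val_injective.comp μ.injective)) fun n => (μ n).2.2
  have hw : LinearIndependent 𝕜 (R ∘ e) := by
    refine LinearIndependent.of_comp ((R ∘L (1 + G) : E →L[𝕜] E) : E →ₗ[𝕜] E) ?_
    refine linearIndependent_of_ne_zero_of_inner_eq_zero (fun n => ?_) fun m n hmn => ?_
    · exact (hTe n).trans_ne (smul_ne_zero (by simpa using (μ n).2.1.ne) (he.ne_zero n))
    · change ⟪(R ∘L (1 + G) ∘L R : E →ₗ[𝕜] E) (e m), (R ∘L (1 + G) ∘L R : E →ₗ[𝕜] E) (e n)⟫ = 0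
      rw [hTe m, hTe n, inner_smul_left, inner_smul_right, he.2 hmn, mul_zero, mul_zero]
  obtain ⟨x, hx, hpos⟩ := hG.exists_re_inner_one_add_apply_pos hw
  rw [Set.range_comp, ← ContinuousLinearMap.coe_coe, Submodule.span_image] at hx
  obtain ⟨y, hy, rfl⟩ := hx
  have : ⟪(1 + G) (R y), R y⟫ = ⟪(R ∘L (1 + G) ∘L R) y, y⟫ := (hR.isSymmetric _ _).symm
  exact hpos.not_ge (this ▸ he.re_inner_apply_self_nonpos (fun n => (μ n).2.1.le) hTe hy)

end RCLike

lemma ContinuousLinearMap.setOf_not_bijective_eq_spectrum {𝕜 E : Type*} [NontriviallyNormedField 𝕜]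
    [NormedAddCommGroup E] [NormedSpace 𝕜 E] [CompleteSpace E] (T : E →L[𝕜] E) :
    {μ : 𝕜 | ¬ Function.Bijective ⇑(μ • (1 : E →L[𝕜] E) - T)} = spectrum 𝕜 T := by
  ext μ
  rw [spectrum.mem_iff, Algebra.algebraMap_eq_smul_one, ContinuousLinearMap.isUnit_iff_bijective]
  rfl

section Complex

variable {E : Type*} [NormedAddCommGroup E] [InnerProductSpace ℂ E] [CompleteSpace E]
  {T : E →L[ℂ] E}

lemma IsCompactOperator.spectrum_diff_zero_eq_image (hT : IsCompactOperator T)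
    (hT' : IsSelfAdjoint T) :
    spectrum ℂ T \ {0} =
      (↑) '' {x : ℝ | x ≠ 0 ∧ HasEigenvalue (T : End ℂ E) x} := by
  ext z
  constructor
  · rintro ⟨hz, hz0 : z ≠ 0⟩
    have hre := hT'.mem_spectrum_eq_re hz
    refine ⟨z.re, ⟨fun h0 => hz0 (by rw [hre, h0, Complex.ofReal_zero]), ?_⟩, hre.symm⟩
    rw [← hre]
    exact (hT.hasEigenvalue_iff_mem_spectrum hz0).2 hz
  · rintro ⟨x, ⟨hx0, hx⟩, rfl⟩
    have hx0' : (x : ℂ) ≠ 0 := Complex.ofReal_ne_zero.2 hx0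
    exact ⟨(hT.hasEigenvalue_iff_mem_spectrum hx0').1 hx, hx0'⟩

lemma IsCompactOperator.spectrum_eq_of_range_eq (hT : IsCompactOperator T)
    (hT' : IsSelfAdjoint T) {τ : ℕ → ℝ}
    (hτ : Set.range τ = {x : ℝ | x ≠ 0 ∧ HasEigenvalue (T : End ℂ E) x})
    (hτ0 : Tendsto τ atTop (𝓝 0)) :
    spectrum ℂ T = {0} ∪ Set.range (fun n => (τ n : ℂ)) := by
  have hσ := hT.spectrum_diff_zero_eq_image hT'
  rw [← hτ, ← Set.range_comp] at hσ
  have h0 : (0 : ℂ) ∈ spectrum ℂ T := by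
    refine (spectrum.isClosed T).mem_of_tendsto (b := atTop) (f := Complex.ofReal ∘ τ) ?_
      (Eventually.of_forall fun n => (hσ ▸ Set.mem_range_self n : _ ∈ spectrum ℂ T \ {0}).1)
    simpa using (Complex.continuous_ofReal.tendsto 0).comp hτ0
  rw [Function.comp_def] at hσ
  rw [← hσ, Set.union_sdiff_self, Set.singleton_union, Set.insert_eq_of_mem h0]

end Complex

theorem stmt_11_general {Y : Type*} [NormedAddCommGroup Y] [InnerProductSpace ℂ Y] [CompleteSpace Y]
    (G K R : Y →L[ℂ] Y)
    (hGc : IsCompactOperator ⇑G) (hGsa : IsSelfAdjoint G)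
    (hKc : IsCompactOperator ⇑K)
    (hRsa : IsSelfAdjoint R)
    (hRR : R ∘L R = K)
    (hker : LinearMap.ker (K : Y →ₗ[ℂ] Y) = LinearMap.ker ((R ∘L (1 + G) ∘L R : Y →L[ℂ] Y) : Y →ₗ[ℂ] Y))
    (hkerinf : ¬ FiniteDimensional ℂ ((LinearMap.ker (K : Y →ₗ[ℂ] Y))ᗮ : Submodule ℂ Y)) :
    ∃ τ : ℕ → ℝ, (∀ n, τ n ≠ 0) ∧
      Filter.Tendsto τ Filter.atTop (nhds 0) ∧
      (∀ᶠ n in Filter.atTop, 0 < τ n) ∧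
      {lam : ℂ | ¬ Function.Bijective
          ⇑(lam • (1 : Y →L[ℂ] Y) - R ∘L (1 + G) ∘L R : Y →L[ℂ] Y)} =
        {0} ∪ Set.range (fun n => (τ n : ℂ)) := by
  set T : Y →L[ℂ] Y := R ∘L (1 + G) ∘L R
  have hTsa : IsSelfAdjoint T := ((IsSelfAdjoint.one _).add hGsa).conjugate_self hRsa
  have hTc : IsCompactOperator T := by
    have hT : T = K + R ∘L G ∘L R := by rw [← hRR]; ext; simp [T]
    exact hT ▸ hKc.add ((hGc.comp_clm R).clm_comp R)
  set S := {x : ℝ | x ≠ 0 ∧ HasEigenvalue (T : End ℂ Y) x}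
  have hSinf : S.Infinite := by
    intro hS
    refine hkerinf (hker ▸ hTc.finiteDimensional_orthogonal_ker hTsa ((hS.image (↑)).subset ?_))
    rintro μ ⟨hμ0, hμ⟩
    rw [← hTc.spectrum_diff_zero_eq_image hTsa]
    exact ⟨(hTc.hasEigenvalue_iff_mem_spectrum hμ0).1 hμ, hμ0⟩
  obtain ⟨τ, hτinj, hτS, hτ0⟩ := exists_injective_range_eq_tendsto (a := 0) hSinf fun ε hε =>
    ((hTc.finite_setOf_hasEigenvalue_le_norm hTsa hε).preimage
      Complex.ofReal_injective.injOn).subset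
        fun x ⟨⟨_, hx⟩, hεx⟩ => ⟨hx, by simpa [Real.dist_eq] using hεx⟩
  have hτS' n : τ n ∈ S := hτS ▸ Set.mem_range_self n
  have hτpos : ∀ᶠ n in atTop, 0 < τ n := by
    have hneg := (hGc.finite_setOf_neg_hasEigenvalue_conj hGsa hRsa).preimage hτinj.injOn
    rw [← Nat.cofinite_eq_atTop]
    exact eventually_cofinite.2
      (hneg.subset fun n hn => ⟨(not_lt.1 hn).lt_of_ne (hτS' n).1, (hτS' n).2⟩)
  refine ⟨τ, fun n => (hτS' n).1, hτ0, hτpos, ?_⟩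
  rw [T.setOf_not_bijective_eq_spectrum]
  exact hTc.spectrum_eq_of_range_eq hTsa hτS hτ0

/-- Abstract spectral lemma. With `Y` separable infinite-dimensional, `G`
compact selfadjoint, `I+G` bijective, `K` compact selfadjoint positive semidefinite with
square root `R = K^{1/2}`, `ker K = ker(K^{1/2}(I+G)K^{1/2})`, `(ker K)ᗮ` infinite-dimensional,
and the compression of `I+G` to `(ker K)ᗮ` bijective, the spectrum of `K^{1/2}(I+G)K^{1/2}`
consists of `0` and a sequence of real nonzero eigenvalues tending to `0`, all but finitely
many of which are positive. -/
theorem stmt_11 {Y : Type*} [NormedAddCommGroup Y] [InnerProductSpace ℂ Y] [CompleteSpace Y]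
    [TopologicalSpace.SeparableSpace Y] (hinf : ¬ FiniteDimensional ℂ Y)
    (G K R : Y →L[ℂ] Y)
    (hGc : IsCompactOperator ⇑G) (hGsa : IsSelfAdjoint G)
    (hGbij : Function.Bijective ⇑(1 + G))
    (hKc : IsCompactOperator ⇑K) (hKsa : IsSelfAdjoint K)
    (hKpos : ∀ y : Y, 0 ≤ (inner ℂ (K y) y : ℂ).re)
    (hRsa : IsSelfAdjoint R) (hRpos : ∀ y : Y, 0 ≤ (inner ℂ (R y) y : ℂ).re)
    (hRR : R ∘L R = K)
    (hker : LinearMap.ker (K : Y →ₗ[ℂ] Y) = LinearMap.ker ((R ∘L (1 + G) ∘L R : Y →L[ℂ] Y) : Y →ₗ[ℂ] Y))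
    (hkerinf : ¬ FiniteDimensional ℂ ((LinearMap.ker (K : Y →ₗ[ℂ] Y))ᗮ : Submodule ℂ Y))
    (P : Y →L[ℂ] Y) (hPsa : IsSelfAdjoint P)
    (hPmem : ∀ y : Y, P y ∈ (LinearMap.ker (K : Y →ₗ[ℂ] Y))ᗮ)
    (hPfix : ∀ y ∈ (LinearMap.ker (K : Y →ₗ[ℂ] Y))ᗮ, P y = y)
    (hcompr : Function.Bijective (fun x : ((LinearMap.ker (K : Y →ₗ[ℂ] Y))ᗮ : Submodule ℂ Y) =>
      (⟨P ((1 + G : Y →L[ℂ] Y) (x : Y)), hPmem _⟩ : ((LinearMap.ker (K : Y →ₗ[ℂ] Y))ᗮ : Submodule ℂ Y)))) :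
    ∃ τ : ℕ → ℝ, (∀ n, τ n ≠ 0) ∧
      Filter.Tendsto τ Filter.atTop (nhds 0) ∧
      (∀ᶠ n in Filter.atTop, 0 < τ n) ∧
      {lam : ℂ | ¬ Function.Bijective
          ⇑(lam • (1 : Y →L[ℂ] Y) - R ∘L (1 + G) ∘L R : Y →L[ℂ] Y)} =
        {0} ∪ Set.range (fun n => (τ n : ℂ)) :=
  stmt_11_general G K R hGc hGsa hKc hRsa hRR hker hkerinf
end

section
/- Let c > 0 and for each λ ∈ (−c, c) let (τₙ(λ))_{n∈ℕ} be functions with each τₙ : (−c, c) → ℝ continuous, τₙ(λ) < 0 for all λ, and τₙ(λ) → 0 as n → ∞ for each fixed λ. Suppose for each λ ∈ (−c, 0) there exists n with λ < τₙ(λ). Then there exists an infinite sequence (λₖ) of pairwise distinct points in (−c, 0) such that for each k there is some n with τₙ(λₖ) = λₖ (fixed points of the eigenvalue curves exist and accumulate from the left of 0 or form infinitely many distinct solutions). -/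
open Filter Topology

/-- Fixed point argument. If `τₙ : (−c, c) → ℝ` are continuous negative
eigenvalue curves with `τₙ(λ) → 0` for each fixed `λ`, and for each `λ ∈ (−c, 0)` some `n`
satisfies `λ < τₙ(λ)`, then there exist infinitely many pairwise distinct points
`λₖ ∈ (−c, 0)` which are fixed points `τₙ(λₖ) = λₖ` of some eigenvalue curve. -/
theorem stmt_13 (c : ℝ) (hc : 0 < c) (τ : ℕ → ℝ → ℝ)
    (hcont : ∀ n, ContinuousOn (τ n) (Set.Ioo (-c) c))
    (hneg : ∀ n, ∀ lam ∈ Set.Ioo (-c) c, τ n lam < 0)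
    (hlim : ∀ lam ∈ Set.Ioo (-c) c, Filter.Tendsto (fun n => τ n lam) Filter.atTop (nhds 0))
    (hbelow : ∀ lam ∈ Set.Ioo (-c) (0 : ℝ), ∃ n, lam < τ n lam) :
    ∃ lam : ℕ → ℝ, Function.Injective lam ∧
      ∀ k, lam k ∈ Set.Ioo (-c) (0 : ℝ) ∧ ∃ n, τ n (lam k) = lam k := by
  have key : ∀ a ∈ Set.Ioo (-c) (0:ℝ),
      ∃ x, a < x ∧ x ∈ Set.Ioo (-c) (0:ℝ) ∧ ∃ n, τ n x = x := by
    intro a ha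
    obtain ⟨n, hn⟩ := hbelow a ha
    have h0 : (0:ℝ) ∈ Set.Ioo (-c) c := ⟨by linarith, hc⟩
    have hsub : Set.Icc a (0:ℝ) ⊆ Set.Ioo (-c) c := by
      intro t ht; exact ⟨lt_of_lt_of_le ha.1 ht.1, lt_of_le_of_lt ht.2 hc⟩
    have hf : ContinuousOn (fun t => τ n t - t) (Set.Icc a 0) :=
      ((hcont n).mono hsub).sub continuousOn_id
    have hIVT := intermediate_value_Ioo' (le_of_lt ha.2) hf
    have h0mem : (0:ℝ) ∈ Set.Ioo ((fun t => τ n t - t) 0) ((fun t => τ n t - t) a) := by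
      constructor
      · simpa using hneg n 0 h0
      · simpa using hn
    obtain ⟨x, hx, hfx⟩ := hIVT h0mem
    refine ⟨x, hx.1, ⟨lt_trans ha.1 hx.1, hx.2⟩, n, ?_⟩
    have : τ n x - x = 0 := hfx
    linarith
  have hmem0 : (-c/2 : ℝ) ∈ Set.Ioo (-c) (0:ℝ) := ⟨by linarith, by linarith⟩
  obtain ⟨x0, _, hx0⟩ := key _ hmem0
  have next : ∀ s : {x : ℝ // x ∈ Set.Ioo (-c) (0:ℝ) ∧ ∃ n, τ n x = x},
      ∃ t : {x : ℝ // x ∈ Set.Ioo (-c) (0:ℝ) ∧ ∃ n, τ n x = x}, s.1 < t.1 := by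
    intro s
    obtain ⟨x, hlt, hx⟩ := key s.1 s.2.1
    exact ⟨⟨x, hx⟩, hlt⟩
  choose F hF using next
  set seq : ℕ → {x : ℝ // x ∈ Set.Ioo (-c) (0:ℝ) ∧ ∃ n, τ n x = x} :=
    fun k => F^[k] ⟨x0, hx0⟩ with hseq
  have hmono : StrictMono (fun k => (seq k).1) := by
    apply strictMono_nat_of_lt_succ
    intro k
    have h : seq (k+1) = F (seq k) := Function.iterate_succ_apply' F k _
    rw [h]; exact hF (seq k)
  exact ⟨fun k => (seq k).1, hmono.injective, fun k => (seq k).2⟩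
end
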